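/- Let d, n ≥ 1 and let P = (p₁,…,p_n) ∈ (ℝ^d)^n have pairwise distinct points. Let GenPos_A be the set of tuples A = (A₁,…,A_n) ∈ S_{d,+}(ℝ)^n such that r_{i,j}(A) ≠ r_{k,l}(A) for all unordered pairs {i,j} ≠ {k,l} of distinct indices. Then the ellipsoid-Rips parametrization F, defined by F(A)(σ) = max_{i,j ∈ σ} r_{i,j}(A) (with the convention r_{i,i}(A) = 0) for every nonempty σ ⊆ {1,…,n}, is C^∞ on GenPos_A. Specifically, given A ∈ GenPos_A, letting v̄(σ), w̄(σ) ∈ σ realize max_{i,j ∈ σ} r_{i,j}(A) for each σ, there is an open neighborhood U of A in the ambient space of n-tuples of d×d real matrices such that for every A' ∈ U ∩ S_{d,+}(ℝ)^n and every σ, F(A')(σ) = r_{v̄(σ),w̄(σ)}(A'); since each map A' ↦ r_{i,j}(A') extends to a C^∞ function on an open neighborhood of A in the ambient matrix space, F is C^∞ at A (in the sense of smoothness within the ambient real vector space of n-tuples of d×d matrices). -/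

import Mathlib

open Matrix

noncomputable def euclNorm {d : ℕ} (x : Fin d → ℝ) : ℝ := Real.sqrt (x ⬝ᵥ x)

noncomputable def rEll {d n : ℕ} (p : Fin n → Fin d → ℝ)
    (A : Fin n → Fin d → Fin d → ℝ) (i j : Fin n) : ℝ :=
  if i = j then 0 else
    euclNorm (p i - p j) /
      ((1 / 2) *
        (Real.sqrt ((Matrix.of (A i)).mulVec ((euclNorm (p i - p j))⁻¹ • (p i - p j)) ⬝ᵥ
            ((euclNorm (p i - p j))⁻¹ • (p i - p j))) +
         Real.sqrt ((Matrix.of (A j)).mulVec (-((euclNorm (p i - p j))⁻¹ • (p i - p j))) ⬝ᵥ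
            (-((euclNorm (p i - p j))⁻¹ • (p i - p j))))))

noncomputable def ellipsoidRipsParam {d n : ℕ} (p : Fin n → Fin d → ℝ)
    (A : Fin n → Fin d → Fin d → ℝ) (σ : {s : Finset (Fin n) // s.Nonempty}) : ℝ :=
  σ.1.sup' σ.2 fun i => σ.1.sup' σ.2 fun j => rEll p A i j

section aux

variable {d n : ℕ}

lemma euclNorm_pos {x : Fin d → ℝ} (hx : x ≠ 0) : 0 < euclNorm x := by
  unfold euclNorm
  apply Real.sqrt_pos.2
  have h0 : 0 ≤ x ⬝ᵥ x := by
    simp only [dotProduct]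
    exact Finset.sum_nonneg fun i _ => mul_self_nonneg (x i)
  rcases h0.lt_or_eq with h | h
  · exact h
  · exact absurd (dotProduct_self_eq_zero.1 h.symm) hx

lemma euclNorm_neg (x : Fin d → ℝ) : euclNorm (-x) = euclNorm x := by
  simp [euclNorm]

lemma rEll_self (p : Fin n → Fin d → ℝ) (A : Fin n → Fin d → Fin d → ℝ) (i : Fin n) :
    rEll p A i i = 0 := by simp [rEll]

lemma rEll_nonneg (p : Fin n → Fin d → ℝ) (A : Fin n → Fin d → Fin d → ℝ) (i j : Fin n) :
    0 ≤ rEll p A i j := by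
  unfold rEll
  split
  · exact le_refl _
  · exact div_nonneg (Real.sqrt_nonneg _)
      (mul_nonneg (by norm_num) (add_nonneg (Real.sqrt_nonneg _) (Real.sqrt_nonneg _)))

lemma rEll_symm (p : Fin n → Fin d → ℝ) (A : Fin n → Fin d → Fin d → ℝ) (i j : Fin n) :
    rEll p A i j = rEll p A j i := by
  rcases eq_or_ne i j with rfl | h
  · rfl
  · unfold rEll
    rw [if_neg h, if_neg (Ne.symm h)]
    have h1 : p j - p i = -(p i - p j) := (neg_sub _ _).symm
    rw [h1, euclNorm_neg, smul_neg, neg_neg,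
      add_comm (Real.sqrt ((Matrix.of (A i)).mulVec ((euclNorm (p i - p j))⁻¹ • (p i - p j)) ⬝ᵥ
        ((euclNorm (p i - p j))⁻¹ • (p i - p j))))]

lemma rEll_pos {p : Fin n → Fin d → ℝ} {A : Fin n → Fin d → Fin d → ℝ} {i j : Fin n}
    (hij : i ≠ j) (hpij : p i ≠ p j)
    (hAi : (Matrix.of (A i)).PosDef) (hAj : (Matrix.of (A j)).PosDef) :
    0 < rEll p A i j := by
  have hx : p i - p j ≠ 0 := sub_ne_zero.2 hpij
  have hc : 0 < euclNorm (p i - p j) := euclNorm_pos hx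
  have hu : (euclNorm (p i - p j))⁻¹ • (p i - p j) ≠ 0 :=
    smul_ne_zero (inv_ne_zero hc.ne') hx
  have hq1 : 0 < (Matrix.of (A i)).mulVec ((euclNorm (p i - p j))⁻¹ • (p i - p j)) ⬝ᵥ
      ((euclNorm (p i - p j))⁻¹ • (p i - p j)) := by
    rw [dotProduct_comm]
    simpa using hAi.dotProduct_mulVec_pos hu
  have hq2 : 0 < (Matrix.of (A j)).mulVec (-((euclNorm (p i - p j))⁻¹ • (p i - p j))) ⬝ᵥ
      (-((euclNorm (p i - p j))⁻¹ • (p i - p j))) := by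
    rw [dotProduct_comm]
    simpa using hAj.dotProduct_mulVec_pos (neg_ne_zero.2 hu)
  rw [rEll, if_neg hij]
  exact div_pos hc (mul_pos (by norm_num)
    (add_pos (Real.sqrt_pos.2 hq1) (Real.sqrt_pos.2 hq2)))

lemma contDiff_quadform (i : Fin n) (v : Fin d → ℝ) :
    ContDiff ℝ (⊤ : ℕ∞) (fun A' : Fin n → Fin d → Fin d → ℝ =>
      (Matrix.of (A' i)).mulVec v ⬝ᵥ v) := by
  simp only [Matrix.mulVec, dotProduct, Matrix.of_apply]
  apply ContDiff.sum; intro a _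
  apply ContDiff.mul _ contDiff_const
  apply ContDiff.sum; intro b _
  apply ContDiff.mul _ contDiff_const
  exact ((contDiff_pi.mp contDiff_id) b).comp
    (((contDiff_pi.mp contDiff_id) a).comp ((contDiff_pi.mp contDiff_id) i))

lemma contDiffAt_rEll {p : Fin n → Fin d → ℝ} {A : Fin n → Fin d → Fin d → ℝ} {i j : Fin n}
    (hij : i ≠ j) (hpij : p i ≠ p j)
    (hAi : (Matrix.of (A i)).PosDef) (hAj : (Matrix.of (A j)).PosDef) :
    ContDiffAt ℝ (⊤ : ℕ∞) (fun A' => rEll p A' i j) A := by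
  have hx : p i - p j ≠ 0 := sub_ne_zero.2 hpij
  have hc : 0 < euclNorm (p i - p j) := euclNorm_pos hx
  have hu : (euclNorm (p i - p j))⁻¹ • (p i - p j) ≠ 0 :=
    smul_ne_zero (inv_ne_zero hc.ne') hx
  have hq1 : 0 < (Matrix.of (A i)).mulVec ((euclNorm (p i - p j))⁻¹ • (p i - p j)) ⬝ᵥ
      ((euclNorm (p i - p j))⁻¹ • (p i - p j)) := by
    rw [dotProduct_comm]
    simpa using hAi.dotProduct_mulVec_pos hu
  have hq2 : 0 < (Matrix.of (A j)).mulVec (-((euclNorm (p i - p j))⁻¹ • (p i - p j))) ⬝ᵥ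
      (-((euclNorm (p i - p j))⁻¹ • (p i - p j))) := by
    rw [dotProduct_comm]
    simpa using hAj.dotProduct_mulVec_pos (neg_ne_zero.2 hu)
  simp only [rEll, if_neg hij]
  apply ContDiffAt.div contDiffAt_const
  · apply ContDiffAt.mul contDiffAt_const
    apply ContDiffAt.add
    · exact (Real.contDiffAt_sqrt hq1.ne').comp A
        (contDiff_quadform i ((euclNorm (p i - p j))⁻¹ • (p i - p j))).contDiffAt
    · exact (Real.contDiffAt_sqrt hq2.ne').comp A
        (contDiff_quadform j (-((euclNorm (p i - p j))⁻¹ • (p i - p j)))).contDiffAt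
  · exact (mul_pos (by norm_num : (0:ℝ) < 1/2)
      (add_pos (Real.sqrt_pos.2 hq1) (Real.sqrt_pos.2 hq2))).ne'

end aux

/-- For a point cloud `P` with pairwise distinct points and a tuple
`A ∈ GenPos_A` of symmetric positive-definite matrices with pairwise distinct
ellipsoidal distances, the ellipsoid-Rips parametrization
`F(A')(σ) = max_{i,j ∈ σ} r_{i,j}(A')` is `C^∞` at `A` in the ambient space of
`n`-tuples of `d×d` matrices; specifically, for every choice `v̄, w̄` of indices in each
simplex realizing the maximum, there is an open neighborhood `U` of `A` in the ambient
space such that `F(A')(σ) = r_{v̄(σ),w̄(σ)}(A')` for every `A' ∈ U ∩ S_{d,+}(ℝ)^n`. -/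
theorem ellipsoidRipsParam_contDiffAt_of_genPos (d n : ℕ) (hd : 1 ≤ d) (hn : 1 ≤ n)
    (p : Fin n → Fin d → ℝ) (hp : ∀ i j : Fin n, i ≠ j → p i ≠ p j)
    (A : Fin n → Fin d → Fin d → ℝ) (hA : ∀ i, (Matrix.of (A i)).PosDef)
    (hgen : ∀ i j k l : Fin n, i ≠ j → k ≠ l →
      ({i, j} : Finset (Fin n)) ≠ ({k, l} : Finset (Fin n)) →
      rEll p A i j ≠ rEll p A k l) :
    ContDiffAt ℝ (⊤ : ℕ∞) (ellipsoidRipsParam p) A ∧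
    ∀ vbar wbar : {s : Finset (Fin n) // s.Nonempty} → Fin n,
      (∀ σ : {s : Finset (Fin n) // s.Nonempty},
        vbar σ ∈ σ.1 ∧ wbar σ ∈ σ.1 ∧
          ellipsoidRipsParam p A σ = rEll p A (vbar σ) (wbar σ)) →
      ∃ U : Set (Fin n → Fin d → Fin d → ℝ), IsOpen U ∧ A ∈ U ∧
        ∀ A' ∈ U, (∀ i, (Matrix.of (A' i)).PosDef) →
          ∀ σ : {s : Finset (Fin n) // s.Nonempty},
            ellipsoidRipsParam p A' σ = rEll p A' (vbar σ) (wbar σ) := by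
  classical
  have hpos : ∀ {i j : Fin n}, i ≠ j → 0 < rEll p A i j :=
    fun {i j} h => rEll_pos h (hp i j h) (hA i) (hA j)
  -- sup equals the value at a dominating pair
  have sup_eq : ∀ (A' : Fin n → Fin d → Fin d → ℝ) (σ : {s : Finset (Fin n) // s.Nonempty})
      (v w : Fin n), v ∈ σ.1 → w ∈ σ.1 →
      (∀ i ∈ σ.1, ∀ j ∈ σ.1, rEll p A' i j ≤ rEll p A' v w) →
      ellipsoidRipsParam p A' σ = rEll p A' v w := by
    intro A' σ v w hv hw hdom
    apply le_antisymm
    · exact Finset.sup'_le _ _ fun i hi => Finset.sup'_le _ _ fun j hj => hdom i hi j hj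
    · exact le_trans (Finset.le_sup' (fun j => rEll p A' v j) hw)
        (Finset.le_sup' (fun i => σ.1.sup' σ.2 fun j => rEll p A' i j) hv)
  -- the key eventual dominance statement
  have key : ∀ (σ : {s : Finset (Fin n) // s.Nonempty}) (v w : Fin n), v ∈ σ.1 → w ∈ σ.1 →
      ellipsoidRipsParam p A σ = rEll p A v w →
      ∀ᶠ A' in nhds A, ∀ i ∈ σ.1, ∀ j ∈ σ.1, rEll p A' i j ≤ rEll p A' v w := by
    intro σ v w hv hw hmax
    rw [Filter.eventually_all_finset]; intro i hi
    rw [Filter.eventually_all_finset]; intro j hj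
    rcases eq_or_ne i j with rfl | hij
    · exact Filter.Eventually.of_forall fun A' => by
        rw [rEll_self]; exact rEll_nonneg p A' v w
    have hle : rEll p A i j ≤ rEll p A v w := by
      rw [← hmax]
      exact le_trans (Finset.le_sup' (fun j' => rEll p A i j') hj)
        (Finset.le_sup' (fun i' => σ.1.sup' σ.2 fun j' => rEll p A i' j') hi)
    rcases eq_or_ne v w with rfl | hvw
    · rw [rEll_self] at hle
      exact absurd hle (not_le.2 (hpos hij))
    by_cases hpair : ({i, j} : Finset (Fin n)) = ({v, w} : Finset (Fin n))
    · apply Filter.Eventually.of_forall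
      intro A'
      have hi2 : i = v ∨ i = w := by
        have : i ∈ ({v, w} : Finset (Fin n)) := hpair ▸ Finset.mem_insert_self i {j}
        simpa using this
      have hj2 : j = v ∨ j = w := by
        have : j ∈ ({v, w} : Finset (Fin n)) :=
          hpair ▸ Finset.mem_insert_of_mem (Finset.mem_singleton_self j)
        simpa using this
      rcases hi2 with rfl | rfl
      · rcases hj2 with rfl | rfl
        · exact absurd rfl hij
        · exact le_refl _
      · rcases hj2 with rfl | rfl
        · exact (rEll_symm p A' i j).le
        · exact absurd rfl hij
    · have hlt : rEll p A i j < rEll p A v w :=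
        lt_of_le_of_ne hle (hgen i j v w hij hvw hpair)
      have hc1 : ContinuousAt (fun A' => rEll p A' i j) A :=
        (contDiffAt_rEll hij (hp i j hij) (hA i) (hA j)).continuousAt
      have hc2 : ContinuousAt (fun A' => rEll p A' v w) A :=
        (contDiffAt_rEll hvw (hp v w hvw) (hA v) (hA w)).continuousAt
      exact (hc1.eventually_lt hc2 hlt).mono fun _ h => h.le
  constructor
  · apply contDiffAt_pi.2
    intro σ
    obtain ⟨v, hv, hveq⟩ := Finset.exists_mem_eq_sup' σ.2
      (fun i => σ.1.sup' σ.2 fun j => rEll p A i j)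
    obtain ⟨w, hw, hweq⟩ := Finset.exists_mem_eq_sup' σ.2 (fun j => rEll p A v j)
    have hmax : ellipsoidRipsParam p A σ = rEll p A v w := by
      rw [ellipsoidRipsParam, hveq, hweq]
    have hsmooth : ContDiffAt ℝ (⊤ : ℕ∞) (fun A' => rEll p A' v w) A := by
      rcases eq_or_ne v w with rfl | hvw
      · simp only [rEll, if_pos rfl]; exact contDiffAt_const
      · exact contDiffAt_rEll hvw (hp v w hvw) (hA v) (hA w)
    exact hsmooth.congr_of_eventuallyEq
      ((key σ v w hv hw hmax).mono fun A' h => sup_eq A' σ v w hv hw h)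
  · intro vbar wbar hbar
    have hev : ∀ᶠ A' in nhds A, ∀ σ : {s : Finset (Fin n) // s.Nonempty},
        ∀ i ∈ σ.1, ∀ j ∈ σ.1, rEll p A' i j ≤ rEll p A' (vbar σ) (wbar σ) := by
      rw [Filter.eventually_all]
      intro σ
      exact key σ (vbar σ) (wbar σ) (hbar σ).1 (hbar σ).2.1 (hbar σ).2.2
    obtain ⟨U, hUsub, hUopen, hAU⟩ := mem_nhds_iff.mp hev
    exact ⟨U, hUopen, hAU, fun A' hA' _ σ =>
      sup_eq A' σ _ _ (hbar σ).1 (hbar σ).2.1 (hUsub hA' σ)⟩
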